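/- All values of the Hopf pairing of the divided powers E^{(n)} and F^{(n)} of U_{q^2}(sl_2) against elements of O_{q^2}(SL(2)) lie in Z[q^{±1/2}]: for every monomial x in the generators a,b,c,d of O_{q^2}(SL(2)) and every n ≥ 1, ⟨E^{(n)}, x⟩ ∈ Z[q^{±1/2}] and ⟨F^{(n)}, x⟩ ∈ Z[q^{±1/2}]. -/

import Mathlib

noncomputable section

open TensorProduct

/-- The ground field `k = ℚ(q^{1/2})`, realized as rational functions in
`t = q^{1/2}` over `ℚ`. -/
abbrev k : Type := RatFunc ℚ

/-- `t = q^{1/2}`; thus `q = t²`. -/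
def tQ : k := RatFunc.X

abbrev FU : Type := FreeAlgebra k (Fin 4)

/-- generator `K` -/
def jK : FU := FreeAlgebra.ι k (0 : Fin 4)
/-- generator `K⁻¹` -/
def jKi : FU := FreeAlgebra.ι k (1 : Fin 4)
/-- generator `E` -/
def jE : FU := FreeAlgebra.ι k (2 : Fin 4)
/-- generator `F` -/
def jF : FU := FreeAlgebra.ι k (3 : Fin 4)

/-- scalar `q^{n/2} = t^n` in the free algebra. -/
def us (n : ℤ) : FU := algebraMap k FU (tQ ^ n)

/-- Defining relations of `U_{q²}(sl₂)`: `K K⁻¹ = K⁻¹ K = 1`, `KE = q⁴EK`,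
`KF = q⁻⁴FK`, `[E,F] = (K - K⁻¹)/(q² - q⁻²)` (with `q⁴ = t⁸`, `q² - q⁻² = t⁴ - t⁻⁴`). -/
inductive UqRel : FU → FU → Prop
  | KKi : UqRel (jK * jKi) 1
  | KiK : UqRel (jKi * jK) 1
  | KE : UqRel (jK * jE) (us 8 * (jE * jK))
  | KF : UqRel (jK * jF) (us (-8) * (jF * jK))
  | EF : UqRel (jE * jF - jF * jE)
      (algebraMap k FU ((tQ ^ (4 : ℤ) - tQ ^ (-4 : ℤ))⁻¹) * (jK - jKi))

/-- The quantized enveloping algebra `U_{q²}(sl₂)`. -/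
abbrev Uq : Type := RingQuot UqRel

def hK : Uq := RingQuot.mkAlgHom k UqRel jK
def hKi : Uq := RingQuot.mkAlgHom k UqRel jKi
def hE : Uq := RingQuot.mkAlgHom k UqRel jE
def hF : Uq := RingQuot.mkAlgHom k UqRel jF

/-- scalar `q^{n/2} = t^n` in `U_{q²}(sl₂)`. -/
def ks (n : ℤ) : Uq := algebraMap k Uq (tQ ^ n)

/-- generator `a` of `O_{q²}(SL₂)` over `k` -/
def ya : FU := FreeAlgebra.ι k (0 : Fin 4)
def yb : FU := FreeAlgebra.ι k (1 : Fin 4)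
def yc : FU := FreeAlgebra.ι k (2 : Fin 4)
def yd : FU := FreeAlgebra.ι k (3 : Fin 4)

/-- Defining relations of `O_{q²}(SL₂)` over `k` (with `q² = t⁴`). -/
inductive OkRel : FU → FU → Prop
  | ca : OkRel (yc * ya) (us 4 * (ya * yc))
  | db : OkRel (yd * yb) (us 4 * (yb * yd))
  | ba : OkRel (yb * ya) (us 4 * (ya * yb))
  | dc : OkRel (yd * yc) (us 4 * (yc * yd))
  | bc : OkRel (yb * yc) (yc * yb)
  | det1 : OkRel (ya * yd - us (-4) * (yb * yc)) 1
  | det2 : OkRel (yd * ya - us 4 * (yc * yb)) 1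

/-- The quantum coordinate ring `O_{q²}(SL₂)` over `k`. -/
abbrev Ok : Type := RingQuot OkRel

def oa : Ok := RingQuot.mkAlgHom k OkRel ya
def ob : Ok := RingQuot.mkAlgHom k OkRel yb
def oc : Ok := RingQuot.mkAlgHom k OkRel yc
def od : Ok := RingQuot.mkAlgHom k OkRel yd

/-- The quantum integer `[n] = (q^{2n} - q^{-2n})/(q² - q⁻²)` (with `q = t²`). -/
def qint (n : ℕ) : k := (tQ ^ (4 * (n : ℤ)) - tQ ^ (-(4 * (n : ℤ)))) / (tQ ^ (4 : ℤ) - tQ ^ (-4 : ℤ))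

/-- The quantum factorial `[n]!`. -/
def qfact (n : ℕ) : k := ∏ j ∈ Finset.range n, qint (j + 1)

/-- The divided power `E^{(n)} = Eⁿ/[n]!`. -/
def divE (n : ℕ) : Uq := (qfact n)⁻¹ • hE ^ n

/-- The divided power `F^{(n)} = Fⁿ/[n]!`. -/
def divF (n : ℕ) : Uq := (qfact n)⁻¹ • hF ^ n

/-!
With `q = t⁸`, the elements `X = 1 ⊗ E` and `Y = E ⊗ K` satisfy `Y X = q X Y`, so the
`q`-binomial theorem gives `Δ(EⁿKᵐ) = ∑_{i+j=n} [n, i]_q EⁱKᵐ ⊗ EʲK^{i+m}`, where the Gaussian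
binomial satisfies `[n, i]_q [i]_q! [j]_q! = [n]_q!` with `[n]_q = 1 + q + ⋯ + q^{n-1}`.
By induction on the length of a monomial `x`, every `⟨EⁿKᵐ, x⟩` is therefore `[n]_q!` times a
Laurent polynomial in `t`; on the generators the pairing is the natural two-dimensional
representation, in which `E` squares to zero. The balanced factorial `qfact n` differs from
`[n]_q!` by a power of `t`, hence `⟨E^{(n)}, x⟩` is a Laurent polynomial. The same argument
applies to `F` and `K⁻¹`, with the tensor factors exchanged.
-/

open Finset

section QAnalogues

variable {R : Type*} [CommSemiring R] (q : R)

def qNat (n : ℕ) : R := ∑ i ∈ range n, q ^ i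

def qFactorial (n : ℕ) : R := ∏ i ∈ range n, qNat q (i + 1)

def qChoose : ℕ → ℕ → R
  | _, 0 => 1
  | 0, _ + 1 => 0
  | n + 1, j + 1 => qChoose n j + q ^ (j + 1) * qChoose n (j + 1)

@[simp] lemma qChoose_zero_right (n : ℕ) : qChoose q n 0 = 1 := by cases n <;> rfl

lemma qChoose_succ_succ (n j : ℕ) :
    qChoose q (n + 1) (j + 1) = qChoose q n j + q ^ (j + 1) * qChoose q n (j + 1) := rfl

lemma qChoose_eq_zero_of_lt {n j : ℕ} (h : n < j) : qChoose q n j = 0 := by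
  induction n generalizing j with
  | zero => obtain ⟨j, rfl⟩ := Nat.exists_eq_add_one.mpr h; rfl
  | succ n ih =>
    obtain ⟨j, rfl⟩ := Nat.exists_eq_add_one.mpr (Nat.zero_lt_of_lt h)
    rw [qChoose_succ_succ, ih (by omega), ih (by omega), mul_zero, add_zero]

@[simp] lemma qChoose_self (n : ℕ) : qChoose q n n = 1 := by
  induction n with
  | zero => rfl
  | succ n ih =>
    rw [qChoose_succ_succ, ih, qChoose_eq_zero_of_lt q n.lt_succ_self, mul_zero, add_zero]

lemma qNat_add (a b : ℕ) : qNat q (a + b) = qNat q a + q ^ a * qNat q b := by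
  simp only [qNat, sum_range_add, mul_sum, pow_add]

@[simp] lemma qFactorial_zero : qFactorial q 0 = 1 := prod_range_zero _

@[simp] lemma qFactorial_one : qFactorial q 1 = 1 := by simp [qFactorial, qNat]

lemma qFactorial_succ (n : ℕ) : qFactorial q (n + 1) = qFactorial q n * qNat q (n + 1) :=
  prod_range_succ _ _

lemma qChoose_mul_qFactorial_mul_qFactorial (i j : ℕ) :
    qChoose q (i + j) j * (qFactorial q i * qFactorial q j) = qFactorial q (i + j) := by
  induction i generalizing j with
  | zero => simp
  | succ i ih =>
    induction j with
    | zero => simp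
    | succ j ihj =>
      have h₂ := ih (j + 1)
      rw [show i + 1 + j = i + j + 1 by omega] at ihj
      rw [show i + (j + 1) = i + j + 1 by omega] at h₂
      calc qChoose q (i + 1 + (j + 1)) (j + 1) * (qFactorial q (i + 1) * qFactorial q (j + 1))
          = qChoose q (i + j + 1) j * (qFactorial q (i + 1) * qFactorial q j) * qNat q (j + 1)
            + q ^ (j + 1)
              * (qChoose q (i + j + 1) (j + 1) * (qFactorial q i * qFactorial q (j + 1)))
              * qNat q (i + 1) := by
            rw [show i + 1 + (j + 1) = i + j + 1 + 1 by omega, qChoose_succ_succ,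
              qFactorial_succ q i, qFactorial_succ q j]
            ring
        _ = qFactorial q (i + j + 1) * qNat q ((j + 1) + (i + 1)) := by
            rw [ihj, h₂, qNat_add q (j + 1) (i + 1)]; ring
        _ = qFactorial q (i + 1 + (j + 1)) := by
            rw [show i + 1 + (j + 1) = i + j + 1 + 1 by omega,
              show j + 1 + (i + 1) = i + j + 1 + 1 by omega, qFactorial_succ q (i + j + 1)]

lemma qChoose_snd_mul_qFactorial_mul_qFactorial {n : ℕ} {p : ℕ × ℕ} (hp : p ∈ antidiagonal n) :
    qChoose q n p.2 * (qFactorial q p.1 * qFactorial q p.2) = qFactorial q n := by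
  rw [← mem_antidiagonal.mp hp, qChoose_mul_qFactorial_mul_qFactorial]

lemma qChoose_fst_mul_qFactorial_mul_qFactorial {n : ℕ} {p : ℕ × ℕ} (hp : p ∈ antidiagonal n) :
    qChoose q n p.1 * (qFactorial q p.1 * qFactorial q p.2) = qFactorial q n := by
  rw [mul_comm (qFactorial q p.1)]
  exact qChoose_snd_mul_qFactorial_mul_qFactorial q (p := p.swap)
    (mem_antidiagonal.mpr ((add_comm _ _).trans (mem_antidiagonal.mp hp)))

variable {A : Type*} [Semiring A] [Algebra R A] {X Y : A}

lemma pow_mul_eq_smul_mul_pow (h : Y * X = q • (X * Y)) (j : ℕ) :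
    Y ^ j * X = q ^ j • (X * Y ^ j) := by
  induction j with
  | zero => simp
  | succ j ih =>
    rw [pow_succ, mul_assoc, h, mul_smul_comm, ← mul_assoc, ih, smul_mul_assoc, smul_smul,
      mul_assoc, ← pow_succ, ← pow_succ']

theorem add_pow_eq_sum_qChoose (h : Y * X = q • (X * Y)) (n : ℕ) :
    (X + Y) ^ n = ∑ p ∈ antidiagonal n, qChoose q n p.2 • (X ^ p.1 * Y ^ p.2) := by
  induction n with
  | zero => simp
  | succ n ih =>
    set g : ℕ × ℕ → A := fun p ↦ (q ^ p.2 * qChoose q n p.2) • (X ^ p.1 * Y ^ p.2)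
    have hX : (∑ p ∈ antidiagonal n, qChoose q n p.2 • (X ^ p.1 * Y ^ p.2)) * X
        = ∑ p ∈ antidiagonal (n + 1), g p := by
      rw [Nat.sum_antidiagonal_succ, sum_mul]
      simp only [g, qChoose_eq_zero_of_lt q n.lt_succ_self, mul_zero, zero_smul, zero_add]
      refine sum_congr rfl fun p _ ↦ ?_
      rw [smul_mul_assoc, mul_assoc, pow_mul_eq_smul_mul_pow q h, mul_smul_comm, smul_smul,
        mul_comm, ← mul_assoc, ← pow_succ]
    rw [pow_succ, ih, mul_add, hX, sum_mul, Nat.sum_antidiagonal_succ' (f := g),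
      Nat.sum_antidiagonal_succ']
    simp only [g, qChoose_succ_succ, add_smul, sum_add_distrib, smul_mul_assoc, mul_assoc,
      ← pow_succ, pow_zero, qChoose_zero_right, mul_one, one_smul]
    abel

end QAnalogues

lemma balanced_qNat_mul_pow {K : Type*} [Field K] {u : K} (hu : u ≠ 0) (hu2 : u ^ 2 ≠ 1)
    (n : ℕ) : (u ^ (n + 1) - (u ^ (n + 1))⁻¹) / (u - u⁻¹) * u ^ n = qNat (u ^ 2) (n + 1) := by
  have hgeom : qNat (u ^ 2) (n + 1) = ((u ^ 2) ^ (n + 1) - 1) / (u ^ 2 - 1) :=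
    (eq_div_iff (sub_ne_zero.mpr hu2)).mpr (geom_sum_mul _ _)
  have hden : u - u⁻¹ = (u ^ 2 - 1) / u := by field_simp
  rw [hgeom, hden]
  field_simp
  ring

lemma tQ_ne_zero : tQ ≠ 0 := RatFunc.X_ne_zero

lemma tQ_pow_eight_ne_one : tQ ^ 8 ≠ 1 := by
  intro h
  have hX : (Polynomial.X ^ 8 : Polynomial ℚ) = 1 :=
    RatFunc.algebraMap_injective ℚ (by simpa [tQ, RatFunc.algebraMap_X] using h)
  simpa using congrArg (Polynomial.eval 0) hX

lemma qint_succ_mul_pow (j : ℕ) : qint (j + 1) * (tQ ^ 4) ^ j = qNat (tQ ^ 8) (j + 1) := by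
  have hu2 : (tQ ^ 4) ^ 2 = tQ ^ 8 := by rw [← pow_mul]
  have hz (n : ℕ) : tQ ^ (4 * (n : ℤ)) = (tQ ^ 4) ^ n := by
    rw [zpow_mul, zpow_natCast, zpow_ofNat]
  rw [← hu2, ← balanced_qNat_mul_pow (pow_ne_zero 4 tQ_ne_zero) (hu2 ▸ tQ_pow_eight_ne_one), qint,
    zpow_neg, hz, zpow_neg, zpow_ofNat]

lemma qfact_mul_prod_pow (n : ℕ) :
    qfact n * ∏ j ∈ range n, (tQ ^ 4) ^ j = qFactorial (tQ ^ 8) n := by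
  rw [qfact, ← prod_mul_distrib]
  exact prod_congr rfl fun j _ ↦ qint_succ_mul_pow j

def laurent : Subalgebra ℤ k := Algebra.adjoin ℤ ({tQ, tQ⁻¹} : Set k)

lemma tQ_mem_laurent : tQ ∈ laurent := Algebra.subset_adjoin (Set.mem_insert _ _)

lemma tQ_inv_mem_laurent : tQ⁻¹ ∈ laurent :=
  Algebra.subset_adjoin (Set.mem_insert_of_mem _ (Set.mem_singleton _))

lemma zpow_tQ_mem_laurent (z : ℤ) : tQ ^ z ∈ laurent := by
  obtain ⟨n, rfl | rfl⟩ := z.eq_nat_or_neg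
  · rw [zpow_natCast]
    exact pow_mem tQ_mem_laurent n
  · rw [zpow_neg, zpow_natCast, ← inv_pow]
    exact pow_mem tQ_inv_mem_laurent n

lemma inv_qfact_mul_qFactorial_mem_laurent (n : ℕ) :
    (qfact n)⁻¹ * qFactorial (tQ ^ 8) n ∈ laurent := by
  rw [← qfact_mul_prod_pow]
  -- `qfact n ≠ 0`, but the junk value `0⁻¹ = 0` spares us proving it
  rcases eq_or_ne (qfact n) 0 with h | h
  · simp [h]
  · rw [inv_mul_cancel_left₀ h]
    exact prod_mem fun j _ ↦ pow_mem (pow_mem tQ_mem_laurent 4) j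

lemma hK_mul_hKi : hK * hKi = 1 := by
  simpa [hK, hKi] using RingQuot.mkAlgHom_rel k UqRel.KKi

lemma hKi_mul_hK : hKi * hK = 1 := by
  simpa [hK, hKi] using RingQuot.mkAlgHom_rel k UqRel.KiK

lemma hK_mul_hE : hK * hE = (tQ ^ 8 : k) • (hE * hK) := by
  simpa [hK, hE, us, Algebra.smul_def] using RingQuot.mkAlgHom_rel k UqRel.KE

lemma hF_mul_hK : hF * hK = (tQ ^ 8 : k) • (hK * hF) := by
  have h : hK * hF = (tQ ^ 8 : k)⁻¹ • (hF * hK) := by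
    simpa [hK, hF, us, Algebra.smul_def] using RingQuot.mkAlgHom_rel k UqRel.KF
  rw [h, smul_smul, mul_inv_cancel₀ (pow_ne_zero 8 tQ_ne_zero), one_smul]

lemma hKi_mul_hF : hKi * hF = (tQ ^ 8 : k) • (hF * hKi) := by
  calc hKi * hF = hKi * (hF * hK) * hKi := by
        rw [← mul_assoc, mul_assoc _ hK, hK_mul_hKi, mul_one]
    _ = (tQ ^ 8 : k) • (hF * hKi) := by
        rw [hF_mul_hK, mul_smul_comm, smul_mul_assoc, ← mul_assoc, hKi_mul_hK, one_mul]

section Coproduct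

variable (ΔU : Uq →ₐ[k] (Uq ⊗[k] Uq))

lemma coproduct_hE_pow_mul_hK_pow (hΔE : ΔU hE = 1 ⊗ₜ hE + hE ⊗ₜ hK)
    (hΔK : ΔU hK = hK ⊗ₜ hK) (n m : ℕ) :
    ΔU (hE ^ n * hK ^ m) = ∑ p ∈ antidiagonal n,
      qChoose (tQ ^ 8) n p.1 • ((hE ^ p.1 * hK ^ m) ⊗ₜ (hE ^ p.2 * hK ^ (p.1 + m))) := by
  have hcomm : (hE ⊗ₜ[k] hK) * (1 ⊗ₜ hE) = (tQ ^ 8 : k) • ((1 ⊗ₜ hE) * (hE ⊗ₜ[k] hK)) := by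
    simp only [Algebra.TensorProduct.tmul_mul_tmul, mul_one, one_mul, hK_mul_hE, tmul_smul]
  rw [map_mul, map_pow, map_pow, hΔE, hΔK, add_pow_eq_sum_qChoose _ hcomm, sum_mul,
    ← Nat.sum_antidiagonal_swap]
  refine sum_congr rfl fun p _ ↦ ?_
  simp only [Prod.fst_swap, Prod.snd_swap, Algebra.TensorProduct.tmul_pow, one_pow, smul_mul_assoc,
    Algebra.TensorProduct.tmul_mul_tmul, one_mul, mul_assoc, pow_add]

lemma coproduct_hF_pow_mul_hKi_pow (hΔF : ΔU hF = hKi ⊗ₜ hF + hF ⊗ₜ 1)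
    (hΔKi : ΔU hKi = hKi ⊗ₜ hKi) (n m : ℕ) :
    ΔU (hF ^ n * hKi ^ m) = ∑ p ∈ antidiagonal n,
      qChoose (tQ ^ 8) n p.2 • ((hF ^ p.1 * hKi ^ (p.2 + m)) ⊗ₜ (hF ^ p.2 * hKi ^ m)) := by
  have hcomm : (hKi ⊗ₜ[k] hF) * (hF ⊗ₜ 1) = (tQ ^ 8 : k) • ((hF ⊗ₜ 1) * (hKi ⊗ₜ[k] hF)) := by
    simp only [Algebra.TensorProduct.tmul_mul_tmul, mul_one, one_mul, hKi_mul_hF, smul_tmul']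
  rw [map_mul, map_pow, map_pow, hΔF, hΔKi, add_comm, add_pow_eq_sum_qChoose _ hcomm, sum_mul]
  refine sum_congr rfl fun p _ ↦ ?_
  simp only [Algebra.TensorProduct.tmul_pow, one_pow, smul_mul_assoc,
    Algebra.TensorProduct.tmul_mul_tmul, one_mul, mul_assoc, pow_add]

end Coproduct

lemma map_pow_mul_pow_of_map_mul {M N : Type*} [Monoid M] [Monoid N] {f : M → N} (h₁ : f 1 = 1)
    (hmul : ∀ x y, f (x * y) = f x * f y) (u w : M) (n m : ℕ) :
    f (u ^ n * w ^ m) = f u ^ n * f w ^ m := by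
  let φ : M →* N := ⟨⟨f, h₁⟩, hmul⟩
  exact (map_mul φ _ _).trans (by rw [map_pow, map_pow]; rfl)

lemma Subalgebra.fin_two_mem_matrix {R A : Type*} [CommSemiring R] [Semiring A] [Algebra R A]
    (S : Subalgebra R A) {a b c d : A} (ha : a ∈ S) (hb : b ∈ S) (hc : c ∈ S) (hd : d ∈ S) :
    !![a, b; c, d] ∈ S.matrix := by
  intro i j
  fin_cases i <;> fin_cases j <;> assumption

section Pairing

variable (P : Uq →ₗ[k] Ok →ₗ[k] k)

lemma pairing_mul_eq_sum (ΔU : Uq →ₐ[k] (Uq ⊗[k] Uq))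
    (hdual1 : ∀ x y₁ y₂, P x (y₁ * y₂)
        = LinearMap.mul' k k ((TensorProduct.map (P.flip y₁) (P.flip y₂)) (ΔU x)))
    {ι : Type*} (s : Finset ι) (c : ι → k) (a b : ι → Uq) {x : Uq}
    (hx : ΔU x = ∑ i ∈ s, c i • (a i ⊗ₜ b i)) (y₁ y₂ : Ok) :
    P x (y₁ * y₂) = ∑ i ∈ s, c i * (P (a i) y₁ * P (b i) y₂) := by
  simp [hdual1, hx, map_sum]

-- The natural representation of `Uq` on `k²`, whose matrix coefficients are `a, b, c, d`.
def pairingMatrix (u : Uq) : Matrix (Fin 2) (Fin 2) k := !![P u oa, P u ob; P u oc, P u od]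

lemma pairingMatrix_mul (ΔO : Ok →ₐ[k] (Ok ⊗[k] Ok))
    (hΔa : ΔO oa = oa ⊗ₜ oa + ob ⊗ₜ oc) (hΔb : ΔO ob = oa ⊗ₜ ob + ob ⊗ₜ od)
    (hΔc : ΔO oc = oc ⊗ₜ oa + od ⊗ₜ oc) (hΔd : ΔO od = oc ⊗ₜ ob + od ⊗ₜ od)
    (hdual2 : ∀ x₁ x₂ y, P (x₁ * x₂) y
        = LinearMap.mul' k k ((TensorProduct.map (P x₁) (P x₂)) (ΔO y)))
    (x₁ x₂ : Uq) : pairingMatrix P (x₁ * x₂) = pairingMatrix P x₁ * pairingMatrix P x₂ := by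
  simp [pairingMatrix, hdual2, hΔa, hΔb, hΔc, hΔd]

lemma pairingMatrix_one (hunit2 : P 1 oa = 1 ∧ P 1 od = 1 ∧ P 1 ob = 0 ∧ P 1 oc = 0) :
    pairingMatrix P 1 = 1 := by
  simp [pairingMatrix, hunit2, Matrix.one_fin_two]

lemma pairing_mul_one (ΔO : Ok →ₐ[k] (Ok ⊗[k] Ok))
    (hdual2 : ∀ x₁ x₂ y, P (x₁ * x₂) y
        = LinearMap.mul' k k ((TensorProduct.map (P x₁) (P x₂)) (ΔO y)))
    (x₁ x₂ : Uq) : P (x₁ * x₂) 1 = P x₁ 1 * P x₂ 1 := by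
  simp [hdual2, Algebra.TensorProduct.one_def]

lemma pairingMatrix_hKi
    (hρmul : ∀ x₁ x₂, pairingMatrix P (x₁ * x₂) = pairingMatrix P x₁ * pairingMatrix P x₂)
    (hρone : pairingMatrix P 1 = 1)
    (hρK : pairingMatrix P hK = !![tQ ^ (4 : ℤ), 0; 0, tQ ^ (-4 : ℤ)]) :
    pairingMatrix P hKi = !![tQ ^ (-4 : ℤ), 0; 0, tQ ^ (4 : ℤ)] := by
  have hinv : pairingMatrix P hK * !![tQ ^ (-4 : ℤ), 0; 0, tQ ^ (4 : ℤ)] = 1 := by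
    simp [hρK, Matrix.one_fin_two, tQ_ne_zero]
  rw [← mul_one (pairingMatrix P hKi), ← hinv, ← mul_assoc, ← hρmul, hKi_mul_hK, hρone, one_mul]

end Pairing

section Divisibility

variable (P : Uq →ₗ[k] Ok →ₗ[k] k) (q : k) (u w : Uq)

def PairingDivisible (y : Ok) : Prop :=
  ∀ n m : ℕ, ∃ r ∈ laurent, P (u ^ n * w ^ m) y = qFactorial q n * r

variable {P q u w}

lemma PairingDivisible.mul (c : ℕ → ℕ × ℕ → k) (α β : ℕ × ℕ → ℕ → ℕ)
    (hc : ∀ n : ℕ, ∀ p ∈ antidiagonal n,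
      c n p * (qFactorial q p.1 * qFactorial q p.2) = qFactorial q n)
    (hexp : ∀ n m y₁ y₂, P (u ^ n * w ^ m) (y₁ * y₂) = ∑ p ∈ antidiagonal n,
      c n p * (P (u ^ p.1 * w ^ α p m) y₁ * P (u ^ p.2 * w ^ β p m) y₂))
    {y₁ y₂ : Ok} (h₁ : PairingDivisible P q u w y₁) (h₂ : PairingDivisible P q u w y₂) :
    PairingDivisible P q u w (y₁ * y₂) := by
  intro n m
  choose r₁ hr₁ hP₁ using fun p : ℕ × ℕ ↦ h₁ p.1 (α p m)
  choose r₂ hr₂ hP₂ using fun p : ℕ × ℕ ↦ h₂ p.2 (β p m)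
  refine ⟨∑ p ∈ antidiagonal n, r₁ p * r₂ p, sum_mem fun p _ ↦ mul_mem (hr₁ p) (hr₂ p), ?_⟩
  rw [hexp, mul_sum]
  refine sum_congr rfl fun p hp ↦ ?_
  rw [hP₁, hP₂, ← hc n p hp]
  ring

lemma pairingDivisible_generator
    (hρmul : ∀ x₁ x₂, pairingMatrix P (x₁ * x₂) = pairingMatrix P x₁ * pairingMatrix P x₂)
    (hρone : pairingMatrix P 1 = 1) (hu : pairingMatrix P u ∈ laurent.matrix)
    (hw : pairingMatrix P w ∈ laurent.matrix) (hu2 : pairingMatrix P u ^ 2 = 0)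
    {g : Ok} (hg : g ∈ ({oa, ob, oc, od} : Set Ok)) : PairingDivisible P q u w g := by
  obtain ⟨i, j, hij⟩ : ∃ i j, ∀ x, P x g = pairingMatrix P x i j := by
    rcases hg with rfl | rfl | rfl | rfl
    exacts [⟨0, 0, fun _ ↦ rfl⟩, ⟨0, 1, fun _ ↦ rfl⟩, ⟨1, 0, fun _ ↦ rfl⟩, ⟨1, 1, fun _ ↦ rfl⟩]
  intro n m
  have hmem : pairingMatrix P (u ^ n * w ^ m) ∈ laurent.matrix := by
    rw [map_pow_mul_pow_of_map_mul hρone hρmul]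
    exact mul_mem (pow_mem hu n) (pow_mem hw m)
  rcases n with _ | _ | n
  · exact ⟨_, hmem i j, by rw [hij, qFactorial_zero, one_mul]⟩
  · exact ⟨_, hmem i j, by rw [hij, qFactorial_one, one_mul]⟩
  · refine ⟨0, zero_mem _, ?_⟩
    rw [hij, map_pow_mul_pow_of_map_mul hρone hρmul, show n + 1 + 1 = 2 + n by omega, pow_add,
      hu2]
    simp

lemma pairingDivisible_one (hεmul : ∀ x₁ x₂, P (x₁ * x₂) 1 = P x₁ 1 * P x₂ 1)
    (hεone : P 1 1 = 1) (hεu : P u 1 = 0) (hεw : P w 1 = 1) : PairingDivisible P q u w 1 := by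
  intro n m
  rw [map_pow_mul_pow_of_map_mul (f := fun x ↦ P x 1) hεone hεmul, hεu, hεw, one_pow, mul_one]
  rcases n with _ | n
  · exact ⟨1, one_mem _, by simp⟩
  · exact ⟨0, zero_mem _, by simp⟩

lemma pairingDivisible_of_mem_closure
    (hρmul : ∀ x₁ x₂, pairingMatrix P (x₁ * x₂) = pairingMatrix P x₁ * pairingMatrix P x₂)
    (hρone : pairingMatrix P 1 = 1) (hεmul : ∀ x₁ x₂, P (x₁ * x₂) 1 = P x₁ 1 * P x₂ 1)
    (hεone : P 1 1 = 1) (hu : pairingMatrix P u ∈ laurent.matrix)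
    (hw : pairingMatrix P w ∈ laurent.matrix) (hu2 : pairingMatrix P u ^ 2 = 0)
    (hεu : P u 1 = 0) (hεw : P w 1 = 1) (c : ℕ → ℕ × ℕ → k) (α β : ℕ × ℕ → ℕ → ℕ)
    (hc : ∀ n : ℕ, ∀ p ∈ antidiagonal n,
      c n p * (qFactorial q p.1 * qFactorial q p.2) = qFactorial q n)
    (hexp : ∀ n m y₁ y₂, P (u ^ n * w ^ m) (y₁ * y₂) = ∑ p ∈ antidiagonal n,
      c n p * (P (u ^ p.1 * w ^ α p m) y₁ * P (u ^ p.2 * w ^ β p m) y₂))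
    {x : Ok} (hx : x ∈ Submonoid.closure ({oa, ob, oc, od} : Set Ok)) :
    PairingDivisible P q u w x := by
  induction hx using Submonoid.closure_induction with
  | mem g hg => exact pairingDivisible_generator hρmul hρone hu hw hu2 hg
  | one => exact pairingDivisible_one hεmul hεone hεu hεw
  | mul _ _ _ _ h₁ h₂ => exact h₁.mul c α β hc hexp h₂

lemma PairingDivisible.pairing_divided_pow_mem_laurent {x : Ok}
    (h : PairingDivisible P (tQ ^ 8) u w x) (n : ℕ) :
    P ((qfact n)⁻¹ • u ^ n) x ∈ laurent := by
  obtain ⟨r, hr, hx⟩ := h n 0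
  rw [pow_zero, mul_one] at hx
  rw [map_smul, LinearMap.smul_apply, hx, smul_eq_mul, ← mul_assoc]
  exact mul_mem (inv_qfact_mul_qFactorial_mem_laurent n) hr

end Divisibility

section DividedPowers

variable (ΔU : Uq →ₐ[k] (Uq ⊗[k] Uq)) {P : Uq →ₗ[k] Ok →ₗ[k] k}
  (hdual1 : ∀ x y₁ y₂, P x (y₁ * y₂)
    = LinearMap.mul' k k ((TensorProduct.map (P.flip y₁) (P.flip y₂)) (ΔU x)))
  (hρmul : ∀ x₁ x₂, pairingMatrix P (x₁ * x₂) = pairingMatrix P x₁ * pairingMatrix P x₂)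
  (hρone : pairingMatrix P 1 = 1) (hεmul : ∀ x₁ x₂, P (x₁ * x₂) 1 = P x₁ 1 * P x₂ 1)
  (hεone : P 1 1 = 1)
include hdual1 hρmul hρone hεmul hεone

lemma pairingDivisible_hE_hK (hΔE : ΔU hE = 1 ⊗ₜ hE + hE ⊗ₜ hK) (hΔK : ΔU hK = hK ⊗ₜ hK)
    (hρE : pairingMatrix P hE = !![0, 1; 0, 0])
    (hρK : pairingMatrix P hK = !![tQ ^ (4 : ℤ), 0; 0, tQ ^ (-4 : ℤ)])
    (hεE : P hE 1 = 0) (hεK : P hK 1 = 1) {x : Ok}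
    (hx : x ∈ Submonoid.closure ({oa, ob, oc, od} : Set Ok)) :
    PairingDivisible P (tQ ^ 8) hE hK x := by
  refine pairingDivisible_of_mem_closure hρmul hρone hεmul hεone ?_ ?_ ?_ hεE hεK
    _ _ _ (fun _ _ ↦ qChoose_fst_mul_qFactorial_mul_qFactorial _)
    (fun n m ↦ pairing_mul_eq_sum P ΔU hdual1 _ _ _ _
      (coproduct_hE_pow_mul_hK_pow ΔU hΔE hΔK n m)) hx
  · exact hρE ▸ laurent.fin_two_mem_matrix (zero_mem _) (one_mem _) (zero_mem _) (zero_mem _)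
  · exact hρK ▸ laurent.fin_two_mem_matrix (zpow_tQ_mem_laurent _) (zero_mem _) (zero_mem _)
      (zpow_tQ_mem_laurent _)
  · rw [hρE, sq]
    ext i j
    fin_cases i <;> fin_cases j <;> simp

lemma pairingDivisible_hF_hKi (hΔF : ΔU hF = hKi ⊗ₜ hF + hF ⊗ₜ 1)
    (hΔKi : ΔU hKi = hKi ⊗ₜ hKi) (hρF : pairingMatrix P hF = !![0, 0; 1, 0])
    (hρKi : pairingMatrix P hKi = !![tQ ^ (-4 : ℤ), 0; 0, tQ ^ (4 : ℤ)])
    (hεF : P hF 1 = 0) (hεKi : P hKi 1 = 1) {x : Ok}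
    (hx : x ∈ Submonoid.closure ({oa, ob, oc, od} : Set Ok)) :
    PairingDivisible P (tQ ^ 8) hF hKi x := by
  refine pairingDivisible_of_mem_closure hρmul hρone hεmul hεone ?_ ?_ ?_ hεF hεKi
    _ _ _ (fun _ _ ↦ qChoose_snd_mul_qFactorial_mul_qFactorial _)
    (fun n m ↦ pairing_mul_eq_sum P ΔU hdual1 _ _ _ _
      (coproduct_hF_pow_mul_hKi_pow ΔU hΔF hΔKi n m)) hx
  · exact hρF ▸ laurent.fin_two_mem_matrix (zero_mem _) (zero_mem _) (one_mem _) (zero_mem _)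
  · exact hρKi ▸ laurent.fin_two_mem_matrix (zpow_tQ_mem_laurent _) (zero_mem _) (zero_mem _)
      (zpow_tQ_mem_laurent _)
  · rw [hρF, sq]
    ext i j
    fin_cases i <;> fin_cases j <;> simp

end DividedPowers

/-- All values of the Hopf pairing of the divided powers `E^{(n)}`, `F^{(n)}` against
monomials in the generators `a,b,c,d` of `O_{q²}(SL₂)` lie in `ℤ[q^{±1/2}]`
(the subring `ℤ[t, t⁻¹]` of `k = ℚ(t)`). -/
theorem divided_powers_pairing_integral
    (ΔU : Uq →ₐ[k] (Uq ⊗[k] Uq))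
    (hΔK : ΔU hK = hK ⊗ₜ hK) (hΔKi : ΔU hKi = hKi ⊗ₜ hKi)
    (hΔE : ΔU hE = 1 ⊗ₜ hE + hE ⊗ₜ hK)
    (hΔF : ΔU hF = hKi ⊗ₜ hF + hF ⊗ₜ 1)
    (ΔO : Ok →ₐ[k] (Ok ⊗[k] Ok))
    (hΔa : ΔO oa = oa ⊗ₜ oa + ob ⊗ₜ oc)
    (hΔb : ΔO ob = oa ⊗ₜ ob + ob ⊗ₜ od)
    (hΔc : ΔO oc = oc ⊗ₜ oa + od ⊗ₜ oc)
    (hΔd : ΔO od = oc ⊗ₜ ob + od ⊗ₜ od)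
    (P : Uq →ₗ[k] Ok →ₗ[k] k)
    (hgen : P hK oa = tQ ^ (4 : ℤ) ∧ P hK od = tQ ^ (-4 : ℤ) ∧
      P hK ob = 0 ∧ P hK oc = 0 ∧
      P hE ob = 1 ∧ P hE oa = 0 ∧ P hE oc = 0 ∧ P hE od = 0 ∧
      P hF oc = 1 ∧ P hF oa = 0 ∧ P hF ob = 0 ∧ P hF od = 0)
    (hdual1 : ∀ x y₁ y₂, P x (y₁ * y₂)
        = LinearMap.mul' k k ((TensorProduct.map (P.flip y₁) (P.flip y₂)) (ΔU x)))
    (hdual2 : ∀ x₁ x₂ y, P (x₁ * x₂) y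
        = LinearMap.mul' k k ((TensorProduct.map (P x₁) (P x₂)) (ΔO y)))
    (hunit1 : P hK 1 = 1 ∧ P hKi 1 = 1 ∧ P hE 1 = 0 ∧ P hF 1 = 0)
    (hunit2 : P 1 oa = 1 ∧ P 1 od = 1 ∧ P 1 ob = 0 ∧ P 1 oc = 0) :
    ∀ x ∈ Submonoid.closure ({oa, ob, oc, od} : Set Ok), ∀ n : ℕ, 1 ≤ n →
      P (divE n) x ∈ Algebra.adjoin ℤ ({tQ, tQ⁻¹} : Set k) ∧
      P (divF n) x ∈ Algebra.adjoin ℤ ({tQ, tQ⁻¹} : Set k) := by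
  obtain ⟨hKa, hKd, hKb, hKc, hEb, hEa, hEc, hEd, hFc, hFa, hFb, hFd⟩ := hgen
  obtain ⟨hεK, hεKi, hεE, hεF⟩ := hunit1
  have hρmul := pairingMatrix_mul P ΔO hΔa hΔb hΔc hΔd hdual2
  have hρone := pairingMatrix_one P hunit2
  have hεmul := pairing_mul_one P ΔO hdual2
  have hεone : P 1 1 = 1 := by rw [← hK_mul_hKi, hεmul, hεK, hεKi, one_mul]
  have hρK : pairingMatrix P hK = !![tQ ^ (4 : ℤ), 0; 0, tQ ^ (-4 : ℤ)] := by
    rw [pairingMatrix, hKa, hKb, hKc, hKd]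
  have hρE : pairingMatrix P hE = !![0, 1; 0, 0] := by rw [pairingMatrix, hEa, hEb, hEc, hEd]
  have hρF : pairingMatrix P hF = !![0, 0; 1, 0] := by rw [pairingMatrix, hFa, hFb, hFc, hFd]
  intro x hx n _
  exact ⟨(pairingDivisible_hE_hK ΔU hdual1 hρmul hρone hεmul hεone hΔE hΔK hρE hρK hεE hεK
      hx).pairing_divided_pow_mem_laurent n,
    (pairingDivisible_hF_hKi ΔU hdual1 hρmul hρone hεmul hεone hΔF hΔKi hρF
      (pairingMatrix_hKi P hρmul hρone hρK) hεF hεKi hx).pairing_divided_pow_mem_laurent n⟩
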